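/- Let ε ∈ ℝ, let ρ : ℝ → ℝ be twice continuously differentiable with compact support, and let u : ℝ → ℝ be twice continuously differentiable. Then ∫_ℝ (−ε ρ'' − (ρ u')')(x) · u(x) dx + ∫_ℝ ρ(x) · (ε u''(x) − (1/2) u'(x)² + ρ(x)) dx = ∫_ℝ [ρ(x)² + (1/2) ρ(x) u'(x)²] dx. -/

import Mathlib

/-!
The difference of the two sides is an exact derivative: pointwise it equals `-F'` for the flux
`F = ρ u' u + ε (ρ' u - ρ u')`. Since `ρ` has compact support, so does `F`, and the integral of the
derivative of an integrable function with integrable derivative over `ℝ` is zero.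
-/

open MeasureTheory Function

noncomputable def mfgFlux (ε : ℝ) (ρ u : ℝ → ℝ) (x : ℝ) : ℝ :=
  ρ x * deriv u x * u x + ε * (deriv ρ x * u x - ρ x * deriv u x)

theorem hasDerivAt_mfgFlux {ρ u : ℝ → ℝ} (ε : ℝ) (hρ : ContDiff ℝ 2 ρ) (hu : ContDiff ℝ 2 u)
    (x : ℝ) :
    HasDerivAt (mfgFlux ε ρ u)
      (deriv (fun y => ρ y * deriv u y) x * u x + ρ x * deriv u x ^ 2
        + ε * (deriv (deriv ρ) x * u x - ρ x * deriv (deriv u) x)) x := by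
  have dρ := (hρ.differentiable two_ne_zero x).hasDerivAt
  have du := (hu.differentiable two_ne_zero x).hasDerivAt
  have dρ' := (hρ.deriv'.differentiable one_ne_zero x).hasDerivAt
  have du' := (hu.deriv'.differentiable one_ne_zero x).hasDerivAt
  have dP : HasDerivAt (fun y => ρ y * deriv u y) (deriv (fun y => ρ y * deriv u y) x) x :=
    ((hρ.differentiable two_ne_zero).mul (hu.deriv'.differentiable one_ne_zero) x).hasDerivAt
  exact ((dP.mul du).add (((dρ'.mul du).sub (dρ.mul du')).const_mul ε)).congr_deriv (by ring)

/-- Static form of the identity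
`d/dt ∫ ρ u dx = ∫ ρ² + (1/2) ρ (∂ₓu)² dx` for the viscous MFG system. -/
theorem mfg_energy_identity (ε : ℝ) (ρ u : ℝ → ℝ)
    (hρ : ContDiff ℝ 2 ρ) (hρc : HasCompactSupport ρ)
    (hu : ContDiff ℝ 2 u) :
    (∫ x : ℝ, (-ε * deriv (deriv ρ) x - deriv (fun y => ρ y * deriv u y) x) * u x)
      + (∫ x : ℝ, ρ x * (ε * deriv (deriv u) x - (1/2) * (deriv u x)^2 + ρ x))
    = ∫ x : ℝ, ((ρ x)^2 + (1/2) * ρ x * (deriv u x)^2) := by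
  have integrable {g : ℝ → ℝ} (hg : Continuous g) (h0 : ∀ x ∉ tsupport ρ, g x = 0) :
      Integrable g :=
    hg.integrable_of_hasCompactSupport (hρc.mono' (support_subset_iff'.2 h0))
  have vanish : ∀ x ∉ tsupport ρ, ρ x = 0 ∧ deriv ρ x = 0 ∧ deriv (deriv ρ) x = 0 ∧
      deriv (fun y => ρ y * deriv u y) x = 0 := fun x hx =>
    ⟨image_eq_zero_of_notMem_tsupport hx, deriv_of_notMem_tsupport hx,
      deriv_of_notMem_tsupport fun h => hx (tsupport_deriv_subset h),
      deriv_of_notMem_tsupport fun h => hx (tsupport_mul_subset_left h)⟩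
  have cρ := hρ.continuous
  have cu := hu.continuous
  have cρ' := hρ.continuous_deriv one_le_two
  have cu' := hu.continuous_deriv one_le_two
  have cρ'' := hρ.deriv'.continuous_deriv le_rfl
  have cu'' := hu.deriv'.continuous_deriv le_rfl
  have cP' := ((hρ.of_le one_le_two).mul hu.deriv').continuous_deriv le_rfl
  have hflux := integral_eq_zero_of_hasDerivAt_of_integrable (hasDerivAt_mfgFlux ε hρ hu)
    (integrable (by fun_prop) fun x hx => by simp [vanish x hx])
    (integrable (by unfold mfgFlux; fun_prop) fun x hx => by simp [mfgFlux, vanish x hx])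
  rw [← sub_eq_zero, ← integral_add, ← integral_sub, ← neg_eq_zero, ← integral_neg, ← hflux]
  · congr 1; ext x; ring
  all_goals exact integrable (by fun_prop) fun x hx => by simp [vanish x hx]
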